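/- arXiv:2309.00109 — 13 statements merged into one kernel-verified Lean document; each statement's English description precedes it below -/
import Mathlib

section
/- Let n be a prime number. For all integers k and s with 0 ≤ s ≤ k < n, the binomial coefficient C(k,s) satisfies C(k,s) ≡ (-1)^(k+s) · C(n-1-s, k-s) (mod n), and equivalently C(k,s) ≡ (-1)^(k+s) · C(n-1-s, n-1-k) (mod n). -/
/-!
Modulo `n` we have `n - 1 - s ≡ -(s + 1)`, so the falling factorial
`(n - 1 - s)(n - 2 - s)⋯(n - k)` of length `j = k - s` is `(-1)^j` times the rising factorial
`(s + 1)(s + 2)⋯k`. Dividing both by `j!`, which is a unit since `j < n`, turns this into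
`C(n - 1 - s, j) ≡ (-1)^j C(k, j) = (-1)^j C(k, s)`; the second congruence is the first one
after the symmetry `C(n - 1 - s, k - s) = C(n - 1 - s, n - 1 - k)`.
-/

open Nat Polynomial

theorem Nat.cast_add_descFactorial_of_add_add_one_eq_zero {R : Type*} [CommRing R] {a b : ℕ}
    (h : (a + b + 1 : R) = 0) (j : ℕ) :
    ((b + j).descFactorial j : R) = (-1) ^ j * (a.descFactorial j : R) := by
  have ha : (a : R) = -((b + 1 : ℕ) : R) := by push_cast; linear_combination h
  have := ascPochhammer_eval_neg_eq_descPochhammer R (-((b + 1 : ℕ) : R)) j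
  rwa [neg_neg, ascPochhammer_nat_eq_natCast_ascFactorial, ← Nat.add_descFactorial_eq_ascFactorial,
    ← ha, descPochhammer_eval_eq_descFactorial] at this

theorem ZMod.choose_eq_neg_one_pow_mul_choose_sub_one_sub {p : ℕ} [Fact p.Prime] {s j : ℕ}
    (h : s + j < p) :
    ((s + j).choose s : ZMod p) = (-1) ^ j * ((p - 1 - s).choose j : ZMod p) := by
  have hj : (j ! : ZMod p) ≠ 0 := by
    rw [Ne, ZMod.natCast_eq_zero_iff, (Fact.out : p.Prime).dvd_factorial]; omega
  have hsum : ((p - 1 - s : ℕ) + s + 1 : ZMod p) = 0 := by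
    have hp : p - 1 - s + s + 1 = p := by omega
    rw [← Nat.cast_add, ← Nat.cast_add_one, hp, ZMod.natCast_self]
  have key := Nat.cast_add_descFactorial_of_add_add_one_eq_zero hsum j
  rw [descFactorial_eq_factorial_mul_choose, descFactorial_eq_factorial_mul_choose,
    ← Nat.choose_symm_add] at key
  push_cast at key
  apply mul_left_cancel₀ hj
  linear_combination key

theorem stmt_0 (n : ℕ) (hn : n.Prime) (k s : ℕ) (hsk : s ≤ k) (hkn : k < n) :
    ((k.choose s : ℤ) ≡ (-1) ^ (k + s) * ((n - 1 - s).choose (k - s) : ℤ) [ZMOD n]) ∧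
    ((k.choose s : ℤ) ≡ (-1) ^ (k + s) * ((n - 1 - s).choose (n - 1 - k) : ℤ) [ZMOD n]) := by
  have : Fact n.Prime := ⟨hn⟩
  obtain ⟨j, rfl⟩ := Nat.exists_eq_add_of_le hsk
  have hsign : (-1 : ℤ) ^ (s + j + s) = (-1) ^ j := by
    rw [show s + j + s = j + 2 * s by ring, pow_add, pow_mul, neg_one_sq, one_pow, mul_one]
  have hsymm : (n - 1 - s).choose (n - 1 - (s + j)) = (n - 1 - s).choose j := by
    rw [show n - 1 - (s + j) = n - 1 - s - j by omega, Nat.choose_symm (by omega)]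
  have main : ((s + j).choose s : ℤ) ≡ (-1) ^ j * ((n - 1 - s).choose j : ℤ) [ZMOD n] := by
    rw [← ZMod.intCast_eq_intCast_iff]
    push_cast
    exact ZMod.choose_eq_neg_one_pow_mul_choose_sub_one_sub hkn
  rw [hsign, hsymm, Nat.add_sub_cancel_left]
  exact ⟨main, main⟩
end

section
/- Let n be a prime number and let m and k be integers with 0 ≤ k ≤ m < n. Set t := min{k, m-k}. Then the following congruence holds modulo n: if m + t > n - 1 then C(m,k) ≡ (-1)^t · C(n-1-m+t, n-1-m) (mod n); if m + t ≤ n - 1 and 2m > n - 1 + t then C(m,k) ≡ (-1)^t · C(n-1-m+t, t) (mod n); and if m + t ≤ n - 1 and 2m ≤ n - 1 + t then C(m,k) = C(m,t). -/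
/-!
Modulo a prime `n` we have `m ≡ -(n - m)`, so the falling product `m (m-1) ⋯ (m-t+1)` is
`(-1)^t (n-m) (n-m+1) ⋯ (n-m+t-1)`, i.e. `(-1)^t` times the falling product of length `t` from
`n-1-m+t`. Since `t < n`, dividing by `t!` gives `C(m,t) ≡ (-1)^t C(n-1-m+t, t)`; all three cases
follow from this, from `C(m,k) = C(m, min k (m-k))` and from the symmetry of binomial coefficients.
-/

open scoped Nat

theorem Nat.cast_descFactorial_eq_neg_one_pow_mul {R : Type*} [CommRing R] {a b : ℕ}
    (h : (a + b + 1 : R) = 0) (t : ℕ) :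
    (a.descFactorial t : R) = (-1) ^ t * ((b + t).descFactorial t : R) := by
  have hneg : ((b + 1 : ℕ) : R) = -a := by push_cast; linear_combination h
  rw [Nat.add_descFactorial_eq_ascFactorial, Nat.cast_ascFactorial, hneg,
    ascPochhammer_eval_neg_eq_descPochhammer, descPochhammer_eval_eq_descFactorial, ← mul_assoc,
    ← mul_pow, neg_one_mul, neg_neg, one_pow, one_mul]

theorem Nat.cast_choose_eq_neg_one_pow_mul {R : Type*} [CommRing R] [NoZeroDivisors R]
    {a b t : ℕ} (h : (a + b + 1 : R) = 0) (ht : (t ! : R) ≠ 0) :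
    (a.choose t : R) = (-1) ^ t * ((b + t).choose t : R) := by
  refine mul_left_cancel₀ ht ?_
  rw [mul_left_comm, ← Nat.cast_mul, ← Nat.cast_mul,
    ← Nat.descFactorial_eq_factorial_mul_choose, ← Nat.descFactorial_eq_factorial_mul_choose,
    Nat.cast_descFactorial_eq_neg_one_pow_mul h]

theorem ZMod.natCast_choose_eq_neg_one_pow_mul {p m t : ℕ} (hp : p.Prime) (hm : m < p)
    (ht : t ≤ m) :
    (m.choose t : ZMod p) = (-1) ^ t * ((p - 1 - m + t).choose t : ZMod p) := by
  have : Fact p.Prime := ⟨hp⟩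
  refine Nat.cast_choose_eq_neg_one_pow_mul ?_ ?_
  · rw [← Nat.cast_add, ← Nat.cast_add_one, show m + (p - 1 - m) + 1 = p by omega,
      ZMod.natCast_self]
  · rw [Ne, ZMod.natCast_eq_zero_iff, hp.dvd_factorial]
    omega

theorem Nat.choose_eq_choose_min {m k : ℕ} (hk : k ≤ m) :
    m.choose k = m.choose (min k (m - k)) := by
  rcases le_total k (m - k) with h | h
  · rw [min_eq_left h]
  · rw [min_eq_right h, Nat.choose_symm hk]

theorem stmt_3 (n : ℕ) (hn : n.Prime) (m k t : ℕ) (hkm : k ≤ m) (hmn : m < n)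
    (ht : t = min k (m - k)) :
    (m + t > n - 1 →
      ((m.choose k : ℤ) ≡ (-1) ^ t * ((n - 1 - m + t).choose (n - 1 - m) : ℤ) [ZMOD n])) ∧
    (m + t ≤ n - 1 → 2 * m > n - 1 + t →
      ((m.choose k : ℤ) ≡ (-1) ^ t * ((n - 1 - m + t).choose t : ℤ) [ZMOD n])) ∧
    (m + t ≤ n - 1 → 2 * m ≤ n - 1 + t → m.choose k = m.choose t) := by
  have hck : m.choose k = m.choose t := ht ▸ Nat.choose_eq_choose_min hkm
  have key : (m.choose k : ℤ) ≡ (-1) ^ t * ((n - 1 - m + t).choose t : ℤ) [ZMOD n] := by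
    rw [← ZMod.intCast_eq_intCast_iff]
    push_cast
    rw [hck]
    exact ZMod.natCast_choose_eq_neg_one_pow_mul hn hmn (ht ▸ (min_le_left _ _).trans hkm)
  refine ⟨fun _ => ?_, fun _ _ => key, fun _ _ => hck⟩
  rwa [Nat.choose_symm_add]
end

section
/- A positive integer n ≥ 2 is prime if and only if C(n-1, i) ≡ (-1)^i (mod n) for all integers i with 0 ≤ i ≤ n-1. -/
/-!
By Pascal's rule `C(n, i+1) = C(n-1, i) + C(n-1, i+1)`, the congruences
`C(n-1, i) ≡ (-1)^i (mod n)` for `i ≤ n - 1` hold exactly when `n` divides every `C(n, i)`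
with `0 < i < n`. For a prime this is classical. Conversely, the gcd of these binomial
coefficients is the least prime factor of `n` when `n` is a prime power and `1` otherwise,
so `n` can divide all of them only if `n` equals its least prime factor.
-/

open Finset

theorem Nat.prime_iff_forall_dvd_choose {n : ℕ} (hn : 2 ≤ n) :
    n.Prime ↔ ∀ i ∈ Icc 1 (n - 1), n ∣ n.choose i := by
  refine ⟨fun hp i hi => ?_, fun h => ?_⟩
  · rw [mem_Icc] at hi
    exact hp.dvd_choose_self (by omega) (by omega)
  have hgcd : n ∣ (Icc 1 (n - 1)).gcd n.choose := Finset.dvd_gcd_iff.mpr h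
  by_cases hpow : IsPrimePow n
  · rw [Choose.gcd_choose_eq_minFac_of_isPrimePow hpow] at hgcd
    exact Nat.dvd_antisymm hgcd n.minFac_dvd ▸ Nat.minFac_prime (by omega)
  · rw [Choose.gcd_choose_eq_one_of_not_isPrimePow (by omega) hpow, Nat.dvd_one] at hgcd
    omega

theorem choose_succ_modEq_neg_one_pow_iff_dvd {d : ℤ} {m k : ℕ}
    (h : (m.choose k : ℤ) ≡ (-1) ^ k [ZMOD d]) :
    (m.choose (k + 1) : ℤ) ≡ (-1) ^ (k + 1) [ZMOD d] ↔ d ∣ (m + 1).choose (k + 1) := by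
  rw [Int.modEq_iff_dvd] at h ⊢
  have hpascal : ((m + 1).choose (k + 1) : ℤ) =
      -(((-1) ^ (k + 1) - m.choose (k + 1)) + ((-1) ^ k - m.choose k)) := by
    rw [Nat.choose_succ_succ']
    push_cast
    ring
  rw [hpascal, dvd_neg, dvd_add_left h]

theorem forall_choose_modEq_neg_one_pow_iff (d : ℤ) (m k : ℕ) :
    (∀ i ≤ k, (m.choose i : ℤ) ≡ (-1) ^ i [ZMOD d]) ↔ ∀ i ∈ Icc 1 k, d ∣ (m + 1).choose i := by
  induction k with
  | zero => simp
  | succ k ih =>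
    rw [← insert_Icc_right_eq_Icc_add_one (by omega), forall_mem_insert, ← ih]
    constructor
    · intro h
      exact ⟨(choose_succ_modEq_neg_one_pow_iff_dvd (h k (by omega))).mp (h _ le_rfl),
        fun i hi => h i (by omega)⟩
    · rintro ⟨hdvd, h⟩ i hi
      rcases Nat.le_succ_iff.mp hi with hi | rfl
      · exact h i hi
      · exact (choose_succ_modEq_neg_one_pow_iff_dvd (h k le_rfl)).mpr hdvd

theorem stmt_5 (n : ℕ) (hn : 2 ≤ n) :
    n.Prime ↔ ∀ i : ℕ, i ≤ n - 1 → (((n - 1).choose i : ℤ) ≡ (-1) ^ i [ZMOD n]) := by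
  obtain ⟨m, rfl⟩ : ∃ m, n = m + 1 := ⟨n - 1, by omega⟩
  rw [Nat.prime_iff_forall_dvd_choose hn, Nat.add_sub_cancel, forall_choose_modEq_neg_one_pow_iff]
  simp only [Int.natCast_dvd_natCast]
end

section
/- For every nonnegative integer n, the identity Σ_{j=0}^{n} (-1)^j · C(2n-j, j) · C(2n-2j, n-j) = 1 holds. -/
/-!
Since `C(2n-j, j) C(2n-2j, n-j) = C(n, j) C(2n-j, n)` (choose `j` of the `n` elements, then
the remaining `n - j` among the other `2n - 2j`, or the other way round), the sum is the
coefficient of `X^n` in `∑ (-1)^j C(n, j) (X+1)^(2n-j) = X^n (X+1)^n`, which is `1`.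
-/

open Finset Polynomial

theorem sum_neg_one_pow_mul_choose_mul_pow_sub {R : Type*} [CommRing R] (y : R) {n m : ℕ}
    (hnm : n ≤ m) :
    ∑ j ∈ range (n + 1), (-1 : R) ^ j * n.choose j * y ^ (m - j) = (y - 1) ^ n * y ^ (m - n) := by
  rw [sub_eq_neg_add, add_pow, sum_mul]
  refine sum_congr rfl fun j hj => ?_
  rw [show m - j = n - j + (m - n) by grind, pow_add]
  ring

theorem sum_neg_one_pow_mul_choose_mul_choose_sub {n m k : ℕ} (hnm : n ≤ m) (hnk : n ≤ k) :
    ∑ j ∈ range (n + 1), (-1 : ℤ) ^ j * n.choose j * (m - j).choose k = (m - n).choose (k - n) := by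
  have h := congrArg (coeff · k) (sum_neg_one_pow_mul_choose_mul_pow_sub (X + 1 : ℤ[X]) hnm)
  simp only [add_sub_cancel_right, coeff_X_pow_mul', if_pos hnk, coeff_X_add_one_pow,
    finsetSum_coeff] at h
  rw [← h]
  refine sum_congr rfl fun j _ => ?_
  have hC : (-1 : ℤ[X]) ^ j * (n.choose j : ℤ[X]) = C ((-1) ^ j * (n.choose j : ℤ)) := by simp
  rw [hC, coeff_C_mul, coeff_X_add_one_pow]

theorem stmt_7 (n : ℕ) :
    ∑ j ∈ Finset.range (n + 1),
      (-1 : ℤ) ^ j * ((2 * n - j).choose j : ℤ) * ((2 * n - 2 * j).choose (n - j) : ℤ) = 1 := by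
  have hswap : ∀ j ∈ range (n + 1),
      (-1 : ℤ) ^ j * ((2 * n - j).choose j : ℤ) * ((2 * n - 2 * j).choose (n - j) : ℤ)
        = (-1 : ℤ) ^ j * n.choose j * (2 * n - j).choose n := by
    intro j hj
    have h := Nat.choose_mul (n := 2 * n - j) (Nat.lt_succ_iff.mp (mem_range.mp hj))
    rw [show 2 * n - j - j = 2 * n - 2 * j by omega] at h
    rw [mul_assoc, mul_assoc, ← Nat.cast_mul, ← Nat.cast_mul, mul_comm (n.choose j), h]
  rw [sum_congr rfl hswap, sum_neg_one_pow_mul_choose_mul_choose_sub (by omega) le_rfl,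
    Nat.sub_self, Nat.choose_zero_right, Nat.cast_one]
end

section
/- For all positive integers s and m, the identity Σ_{j=0}^{s} (-1)^j · C(m+s+j, s) · C(s, j) = (-1)^s holds. -/
/-!
The alternating sum is, up to the sign `(-1) ^ s`, the `s`-th forward difference at `n` of
`x ↦ C(x, s)`; since `Δ C(x, k + 1) = C(x, k)`, that difference is the constant `C(x, 0) = 1`.
-/

open Finset

theorem sum_range_neg_one_pow_mul_add_choose_mul_choose (n s : ℕ) :
    ∑ j ∈ range (s + 1), (-1 : ℤ) ^ j * ((n + j).choose s : ℤ) * (s.choose j : ℤ) = (-1) ^ s := by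
  have hdiff : (fwdDiff 1)^[s] (fun x ↦ x.choose s : ℕ → ℤ) n = 1 := by
    simpa using congr_fun (fwdDiff_iter_choose 0 s) n
  rw [fwdDiff_iter_eq_sum_shift] at hdiff
  calc ∑ j ∈ range (s + 1), (-1 : ℤ) ^ j * ((n + j).choose s : ℤ) * (s.choose j : ℤ)
      = (-1) ^ s * ∑ j ∈ range (s + 1),
          ((-1 : ℤ) ^ (s - j) * s.choose j) • ((n + j • 1).choose s : ℤ) := by
        rw [mul_sum]
        refine sum_congr rfl fun j hj ↦ ?_
        have hsign : (-1 : ℤ) ^ s * (-1) ^ (s - j) = (-1) ^ j := by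
          have hjs := mem_range_succ_iff.mp hj
          rw [← pow_add, show s + (s - j) = j + 2 * (s - j) by omega, pow_add, pow_mul,
            neg_one_sq, one_pow, mul_one]
        rw [smul_eq_mul, smul_eq_mul, mul_one, ← hsign]
        ring
    _ = (-1) ^ s := by rw [hdiff, mul_one]

theorem stmt_8_general (s m : ℕ) :
    ∑ j ∈ Finset.range (s + 1),
      (-1 : ℤ) ^ j * ((m + s + j).choose s : ℤ) * (s.choose j : ℤ) = (-1) ^ s :=
  sum_range_neg_one_pow_mul_add_choose_mul_choose (m + s) s

theorem stmt_8 (s m : ℕ) (hs : 0 < s) (hm : 0 < m) :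
    ∑ j ∈ Finset.range (s + 1),
      (-1 : ℤ) ^ j * ((m + s + j).choose s : ℤ) * (s.choose j : ℤ) = (-1) ^ s :=
  stmt_8_general s m
end

section
/- For all positive integers s and m, the identity Σ_{j=0}^{s} (-1)^j · C(m+s+j, j) · C(m+s, s-j) = (-1)^s holds. -/
/-!
With the generalized binomial coefficients of `ℤ`, `(-1)^j * C(n+j, j) = C(-(n+1), j)`, so the sum is
the Chu–Vandermonde convolution of `C(-(n+1), ·)` and `C(n, ·)` at `s`, i.e. `C(-1, s) = (-1)^s`.
-/

open Finset

theorem Ring.choose_neg_natCast_sub_one (n k : ℕ) :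
    Ring.choose (-(n : ℤ) - 1) k = (-1) ^ k * ((n + k).choose k : ℤ) := by
  rw [show -(n : ℤ) - 1 = -((n + 1 : ℕ) : ℤ) by push_cast; ring, Ring.choose_neg,
    show ((n + 1 : ℕ) : ℤ) + k - 1 = ((n + k : ℕ) : ℤ) by push_cast; ring, Ring.choose_natCast,
    Units.smul_def, Int.coe_negOnePow_natCast, smul_eq_mul]

theorem sum_neg_one_pow_mul_add_choose_mul_choose (n s : ℕ) :
    ∑ j ∈ range (s + 1), (-1 : ℤ) ^ j * ((n + j).choose j : ℤ) * (n.choose (s - j) : ℤ) =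
      (-1) ^ s := by
  have vandermonde := Ring.add_choose_eq s (Commute.all (-(n : ℤ) - 1) n)
  rw [show -(n : ℤ) - 1 + n = -(0 : ℕ) - 1 by ring, Ring.choose_neg_natCast_sub_one,
    Nat.sum_antidiagonal_eq_sum_range_succ (fun i j => Ring.choose (-(n : ℤ) - 1) i *
      Ring.choose (n : ℤ) j)] at vandermonde
  simpa [Ring.choose_neg_natCast_sub_one, Ring.choose_natCast] using vandermonde.symm

theorem stmt_9_general (s m : ℕ) :
    ∑ j ∈ Finset.range (s + 1),
      (-1 : ℤ) ^ j * ((m + s + j).choose j : ℤ) * ((m + s).choose (s - j) : ℤ) = (-1) ^ s :=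
  sum_neg_one_pow_mul_add_choose_mul_choose (m + s) s

theorem stmt_9 (s m : ℕ) (hs : 0 < s) (hm : 0 < m) :
    ∑ j ∈ Finset.range (s + 1),
      (-1 : ℤ) ^ j * ((m + s + j).choose j : ℤ) * ((m + s).choose (s - j) : ℤ) = (-1) ^ s :=
  stmt_9_general s m
end

section
/- For all positive integers s and m, the identity Σ_{j=0}^{m} (-1)^j · C(m,j) / C(s+j, s) = s / (s+m) holds in the field of rational numbers. -/
/-!
The sum is `(-1)^m` times the `m`-th forward difference at `0` of `f_s j = 1 / C(s+j, s)`.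
Since `f_s j = s! / ((j+1) ⋯ (j+s))`, one forward difference gives `Δ f_s = -(s/(s+1)) f_{s+1}`,
so `Δ^m f_s = (-1)^m (s/(s+m)) f_{s+m}`, and `f_{s+m} 0 = 1`.
-/

open Finset fwdDiff

section

variable (K : Type*) [Field K] [CharZero K]

def invChooseAdd (s j : ℕ) : K := ((s + j).choose s : K)⁻¹

variable {K}

lemma fwdDiff_invChooseAdd (s : ℕ) :
    Δ_[1] (invChooseAdd K s) = (-((s : K) / (s + 1))) • invChooseAdd K (s + 1) := by
  ext j
  have hup : ((s + j + 1).choose (s + 1) : K) * (s + 1) = (s + j + 1) * (s + j).choose s := by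
    exact_mod_cast (Nat.add_one_mul_choose_eq (s + j) s).symm
  have hright : ((s + j + 1).choose s : K) * (j + 1) = (s + j + 1) * (s + j).choose s := by
    have := Nat.choose_mul_succ_eq (s + j) s
    rw [show s + j + 1 - s = j + 1 by omega] at this
    exact_mod_cast this.symm.trans (mul_comm _ _)
  have h0 : ((s + j).choose s : K) ≠ 0 := Nat.cast_ne_zero.mpr (Nat.choose_pos (by omega)).ne'
  have h1 : ((s + j + 1).choose s : K) ≠ 0 := Nat.cast_ne_zero.mpr (Nat.choose_pos (by omega)).ne'
  have h2 : ((s + j + 1).choose (s + 1) : K) ≠ 0 :=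
    Nat.cast_ne_zero.mpr (Nat.choose_pos (by omega)).ne'
  simp only [fwdDiff, invChooseAdd, Pi.smul_apply, smul_eq_mul,
    show s + 1 + j = s + j + 1 by omega, ← add_assoc]
  field_simp
  linear_combination (((s + j).choose s : K) - (s + j + 1).choose s) * hup
    - ((s + j).choose s : K) * hright

lemma fwdDiff_iter_invChooseAdd {s m : ℕ} (h : s + m ≠ 0) :
    (Δ_[1])^[m] (invChooseAdd K s) =
      ((-1) ^ m * ((s : K) / (s + m))) • invChooseAdd K (s + m) := by
  induction m generalizing s with
  | zero =>
    have hs : (s : K) ≠ 0 := by exact_mod_cast h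
    simp [hs]
  | succ m ih =>
    rw [Function.iterate_succ_apply, fwdDiff_invChooseAdd, fwdDiff_iter_const_smul, ih (by omega),
      smul_smul, show s + 1 + m = s + (m + 1) by omega]
    congr 1
    push_cast
    field_simp
    ring

theorem sum_range_neg_one_pow_mul_choose_div_choose_add {s m : ℕ} (h : s + m ≠ 0) :
    ∑ j ∈ range (m + 1), (-1 : K) ^ j * (m.choose j : K) / ((s + j).choose s : K) =
      (s : K) / (s + m) := by
  have hdiff := congr_fun (fwdDiff_iter_invChooseAdd (K := K) h) 0
  simp only [fwdDiff_iter_eq_sum_shift, invChooseAdd, Pi.smul_apply, smul_eq_mul, zero_add,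
    add_zero, zsmul_eq_mul, Int.cast_mul, Int.cast_pow, Int.cast_neg,
    Int.cast_one, Int.cast_natCast, Nat.choose_self, Nat.cast_one, inv_one, mul_one] at hdiff
  calc ∑ j ∈ range (m + 1), (-1 : K) ^ j * (m.choose j : K) / ((s + j).choose s : K)
      = (-1) ^ m * ∑ j ∈ range (m + 1),
          (-1) ^ (m - j) * (m.choose j : K) * ((s + j).choose s : K)⁻¹ := by
        rw [mul_sum]
        refine sum_congr rfl fun j hj ↦ ?_
        have hsplit : (-1 : K) ^ m = (-1) ^ j * (-1) ^ (m - j) := by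
          rw [← pow_add, Nat.add_sub_cancel' (by grind)]
        have hsq : ((-1 : K) ^ (m - j)) ^ 2 = 1 := by
          rw [← pow_mul, mul_comm, pow_mul, neg_one_sq, one_pow]
        rw [hsplit, div_eq_mul_inv]
        linear_combination -((-1 : K) ^ j * (m.choose j : K) * ((s + j).choose s : K)⁻¹) * hsq
    _ = (s : K) / (s + m) := by
        rw [hdiff, ← mul_assoc, ← mul_pow, neg_one_mul, neg_neg, one_pow, one_mul]

end

theorem stmt_10_general (s m : ℕ) (hs : 0 < s) :
    ∑ j ∈ Finset.range (m + 1),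
      (-1 : ℚ) ^ j * (m.choose j : ℚ) / ((s + j).choose s : ℚ) = (s : ℚ) / (s + m) :=
  sum_range_neg_one_pow_mul_choose_div_choose_add (by omega)

theorem stmt_10 (s m : ℕ) (hs : 0 < s) (hm : 0 < m) :
    ∑ j ∈ Finset.range (m + 1),
      (-1 : ℚ) ^ j * (m.choose j : ℚ) / ((s + j).choose s : ℚ) = (s : ℚ) / (s + m) :=
  stmt_10_general s m hs
end

section
/- For every positive integer s, the identity Σ_{j=0}^{s} (-1)^j · j · C(s+j, s) · C(s, j) = (-1)^s · (s+1) · s holds. -/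
/-!
The sum is `P'(1)` for the shifted Legendre polynomial
`P = ∑ₖ (-1)ᵏ C(s,k) C(s+k,s) Xᵏ`. Its reflection symmetry `(-1)ˢ P(1 - X) = P`, a consequence
of Rodrigues' formula, gives `P'(1) = -(-1)ˢ P'(0)`, and `P'(0)` is the linear coefficient
`-s(s+1)`.
-/

open Polynomial Finset

theorem Polynomial.eval_one_derivative {R : Type*} [CommSemiring R] (p : R[X]) :
    (derivative p).eval 1 = ∑ k ∈ range (p.natDegree + 1), p.coeff k * k := by
  rw [derivative_apply, eval_sum, sum_over_range] <;> simp

theorem Polynomial.eval_one_derivative_shiftedLegendre (n : ℕ) :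
    (derivative (shiftedLegendre n)).eval 1 = (-1) ^ n * (n + 1) * n := by
  have hreflect : (derivative (shiftedLegendre n)).eval 1 =
      -(-1) ^ n * (derivative (shiftedLegendre n)).eval 0 := by
    conv_lhs => rw [← neg_one_pow_mul_shiftedLegendre_comp_one_sub_X_eq n]
    simp [derivative_comp, derivative_pow]
  have hlinear : (derivative (shiftedLegendre n)).eval 0 = -(n + 1) * n := by
    rw [← coeff_zero_eq_eval_zero, coeff_derivative, zero_add, coeff_shiftedLegendre,
      Nat.choose_one_right, Nat.choose_succ_self_right]
    push_cast
    ring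
  rw [hreflect, hlinear]
  ring

theorem stmt_11_general (s : ℕ) :
    ∑ j ∈ Finset.range (s + 1),
      (-1 : ℤ) ^ j * (j : ℤ) * ((s + j).choose s : ℤ) * (s.choose j : ℤ)
      = (-1) ^ s * (s + 1) * s := by
  rw [← eval_one_derivative_shiftedLegendre, eval_one_derivative, natDegree_shiftedLegendre]
  refine sum_congr rfl fun j _ => ?_
  rw [coeff_shiftedLegendre]
  ring

theorem stmt_11 (s : ℕ) (hs : 0 < s) :
    ∑ j ∈ Finset.range (s + 1),
      (-1 : ℤ) ^ j * (j : ℤ) * ((s + j).choose s : ℤ) * (s.choose j : ℤ)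
      = (-1) ^ s * (s + 1) * s :=
  stmt_11_general s
end

section
/- Let n be a prime number and let s be a nonnegative integer with s < n-1. Then in ZMod n the equality Σ_{k=1}^{n-1-s} (k)⁻¹ · C(k+s, s) = - Σ_{k=1}^{n-1-s} (k)⁻¹ holds, where (k)⁻¹ denotes the multiplicative inverse of the image of k in ZMod n. -/
/-!
With `m = n - 1 - s` we have `s + m + 1 = n`, so `s + j ≡ -(m + 1 - j)` modulo `n`, and for
`k ≤ m`, `k! * C(k + s, s) = (s + 1) ⋯ (s + k) ≡ (-1)^k * m (m - 1) ⋯ (m - k + 1)`, which is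
`(-1)^k * k! * C(m, k)`.
Since `m < n`, the factorials are units, and the theorem becomes the classical identity
`∑_{k=1}^m (-1)^k C(m, k) / k = -(1 + 1/2 + ⋯ + 1/m)`, valid in any field in which `m!` is
nonzero. That identity follows by induction on `m` from Pascal's rule and
`C(m, k) / (k + 1) = C(m + 1, k + 1) / (m + 1)`, together with
`∑_{k=1}^{m+1} (-1)^k C(m+1, k) = -1`.
-/

open Finset Nat

theorem Nat.cast_ne_zero_of_dvd {R : Type*} [Semiring R] {a b : ℕ} (hab : a ∣ b)
    (hb : (b : R) ≠ 0) : (a : R) ≠ 0 :=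
  ne_zero_of_dvd_ne_zero hb (Nat.cast_dvd_cast hab)

theorem Nat.cast_ascFactorial_eq_neg_one_pow_mul_descFactorial {R : Type*} [CommRing R]
    {s m : ℕ} (h : ((s + m + 1 : ℕ) : R) = 0) {k : ℕ} (hk : k ≤ m) :
    ((s + 1).ascFactorial k : R) = (-1) ^ k * (m.descFactorial k : R) := by
  induction k with
  | zero => simp
  | succ k ih =>
    have hneg : ((s + 1 + k : ℕ) : R) = -((m - k : ℕ) : R) := by
      refine eq_neg_of_add_eq_zero_left ?_
      rw [← Nat.cast_add, ← h]
      congr 1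
      omega
    rw [Nat.ascFactorial_succ, Nat.descFactorial_succ, Nat.cast_mul, Nat.cast_mul, hneg,
      ih (by omega)]
    ring

theorem Nat.cast_choose_add_eq_neg_one_pow_mul_cast_choose {F : Type*} [Field F]
    {s m k : ℕ} (h : ((s + m + 1 : ℕ) : F) = 0) (hk : k ≤ m) (hfac : (k ! : F) ≠ 0) :
    ((k + s).choose s : F) = (-1) ^ k * (m.choose k : F) := by
  refine mul_left_cancel₀ hfac ?_
  have hasc := Nat.cast_ascFactorial_eq_neg_one_pow_mul_descFactorial h hk
  rw [Nat.ascFactorial_eq_factorial_mul_choose, Nat.descFactorial_eq_factorial_mul_choose,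
    add_comm s k, Nat.choose_symm_add] at hasc
  push_cast at hasc
  linear_combination hasc

theorem Finset.sum_Icc_neg_one_pow_mul_choose {R : Type*} [CommRing R] {m : ℕ} (hm : m ≠ 0) :
    ∑ k ∈ Icc 1 m, (-1 : R) ^ k * (m.choose k : R) = -1 := by
  have h := congrArg (Int.cast : ℤ → R) (Int.alternating_sum_range_choose_of_ne hm)
  rw [range_eq_Ico, sum_eq_sum_Ico_succ_bot (by omega), Ico_add_one_right_eq_Icc] at h
  push_cast [Nat.choose_zero_right] at h
  linear_combination h

theorem Nat.cast_choose_mul_inv_eq {F : Type*} [Field F] {m k : ℕ}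
    (hk : ((k + 1 : ℕ) : F) ≠ 0) (hm : ((m + 1 : ℕ) : F) ≠ 0) :
    (m.choose k : F) * ((k + 1 : ℕ) : F)⁻¹ =
      ((m + 1).choose (k + 1) : F) * ((m + 1 : ℕ) : F)⁻¹ := by
  field_simp
  rw [← Nat.cast_mul, ← Nat.cast_mul, mul_comm, Nat.add_one_mul_choose_eq, mul_comm]

theorem Finset.sum_Icc_inv_mul_neg_one_pow_mul_choose {F : Type*} [Field F] {m : ℕ}
    (hm : (m ! : F) ≠ 0) :
    ∑ k ∈ Icc 1 m, (k : F)⁻¹ * ((-1) ^ k * (m.choose k : F)) =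
      -∑ k ∈ Icc 1 m, (k : F)⁻¹ := by
  induction m with
  | zero => simp
  | succ m ih =>
    have hm' : (m ! : F) ≠ 0 :=
      Nat.cast_ne_zero_of_dvd (Nat.factorial_dvd_factorial m.le_succ) hm
    have hcast : ∀ k ∈ Icc 1 (m + 1), (k : F) ≠ 0 := fun k hk =>
      Nat.cast_ne_zero_of_dvd (Nat.dvd_factorial (mem_Icc.1 hk).1 (mem_Icc.1 hk).2) hm
    have hsplit : ∀ k ∈ Icc 1 (m + 1),
        (k : F)⁻¹ * ((-1) ^ k * ((m + 1).choose k : F)) =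
          (k : F)⁻¹ * ((-1) ^ k * (m.choose k : F)) +
            ((m + 1 : ℕ) : F)⁻¹ * ((-1) ^ k * ((m + 1).choose k : F)) := by
      intro k hk
      obtain ⟨j, rfl⟩ : ∃ j, k = j + 1 := ⟨k - 1, by grind⟩
      have h := Nat.cast_choose_mul_inv_eq (hcast _ hk) (hcast _ (right_mem_Icc.2 (by omega)))
      rw [Nat.choose_succ_succ'] at h ⊢
      push_cast at h ⊢
      linear_combination (-1 : F) ^ (j + 1) * h
    have hdrop : ∑ k ∈ Icc 1 (m + 1), (k : F)⁻¹ * ((-1) ^ k * (m.choose k : F)) =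
        ∑ k ∈ Icc 1 m, (k : F)⁻¹ * ((-1) ^ k * (m.choose k : F)) := by
      rw [sum_Icc_succ_top (by omega), Nat.choose_succ_self, Nat.cast_zero, mul_zero, mul_zero,
        add_zero]
    rw [sum_congr rfl hsplit, sum_add_distrib, hdrop, ih hm', ← mul_sum,
      sum_Icc_neg_one_pow_mul_choose m.succ_ne_zero, sum_Icc_succ_top (by omega)]
    ring

theorem stmt_13 (n : ℕ) (hn : n.Prime) (s : ℕ) (hs : s < n - 1) :
    ∑ k ∈ Finset.Icc 1 (n - 1 - s), ((k : ZMod n)⁻¹ * ((k + s).choose s : ZMod n))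
      = - ∑ k ∈ Finset.Icc 1 (n - 1 - s), (k : ZMod n)⁻¹ := by
  have : Fact n.Prime := ⟨hn⟩
  set m := n - 1 - s
  have hchar : ((s + m + 1 : ℕ) : ZMod n) = 0 := by
    rw [show s + m + 1 = n by omega, ZMod.natCast_self]
  have hfac : (m ! : ZMod n) ≠ 0 := by
    rw [Ne, ZMod.natCast_eq_zero_iff, hn.dvd_factorial]
    omega
  rw [← sum_Icc_inv_mul_neg_one_pow_mul_choose hfac]
  refine sum_congr rfl fun k hk => ?_
  have hkm := (mem_Icc.1 hk).2
  rw [Nat.cast_choose_add_eq_neg_one_pow_mul_cast_choose hchar hkm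
    (Nat.cast_ne_zero_of_dvd (Nat.factorial_dvd_factorial hkm) hfac)]
end

section
/- Let p be an odd prime and let r be an integer with 0 ≤ r ≤ (p-1)/2. Then Σ_{j=r}^{(p-1)/2} C(2j, j) · C(j, r) · 2^(p-1-2j) ≡ 0 (mod p) if r < (p-1)/2, and Σ_{j=r}^{(p-1)/2} C(2j, j) · C(j, r) · 2^(p-1-2j) ≡ (-1)^((p-1)/2) (mod p) if r = (p-1)/2. -/
/-!
Write `p = 2m + 1`. Since `4i + 2 ≡ -4(m - i) (mod p)`, comparing
`∏_{i<j} (4i + 2) = C(2j, j) j!` with `∏_{i<j} (m - i) = C(m, j) j!` gives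
`C(2j, j) ≡ (-4)^j C(m, j)`, and with `2^(p-1) ≡ 1` the sum becomes
`∑_j (-1)^j C(m, j) C(j, r)`. Writing `C(m, j) C(j, r) = C(m, r) C(m - r, j - r)` turns this into
`(-1)^r C(m, r)` times an alternating sum of binomial coefficients, which vanishes unless `r = m`.
-/

open Finset Nat

theorem Nat.prod_range_four_mul_add_two (j : ℕ) :
    ∏ i ∈ range j, (4 * i + 2) = centralBinom j * j ! := by
  induction j with
  | zero => simp
  | succ n ih =>
    rw [prod_range_succ, ih, factorial_succ]
    linear_combination (n ! : ℕ) * (succ_mul_centralBinom_succ n).symm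

theorem centralBinom_mul_factorial_eq {R : Type*} [CommRing R] {m j : ℕ}
    (hm : (2 * m + 1 : R) = 0) (hj : j ≤ m) :
    (centralBinom j * j ! : R) = (-4) ^ j * (m.choose j * j !) := by
  have hprod :
      ∏ i ∈ range j, (4 * i + 2 : R) = ∏ i ∈ range j, (-4) * ((m - i : ℕ) : R) := by
    refine prod_congr rfl fun i hi => ?_
    rw [cast_sub (by simp at hi; omega)]
    linear_combination (2 : R) * hm
  have h := congrArg (Nat.cast : ℕ → R) (prod_range_four_mul_add_two j)
  have hdesc := congrArg (Nat.cast : ℕ → R) (descFactorial_eq_prod_range m j)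
  rw [descFactorial_eq_factorial_mul_choose] at hdesc
  push_cast at h hdesc
  rw [← h, hprod, prod_mul_distrib, prod_const, card_range, ← hdesc, mul_comm (j ! : R)]

theorem ZMod.centralBinom_eq_neg_four_pow_mul_choose {p m j : ℕ} [Fact p.Prime]
    (hp : p = 2 * m + 1) (hj : j ≤ m) :
    (centralBinom j : ZMod p) = (-4) ^ j * m.choose j := by
  have hfac : (j ! : ZMod p) ≠ 0 := by
    rw [Ne, ZMod.natCast_eq_zero_iff, Nat.Prime.dvd_factorial Fact.out]
    omega
  apply mul_right_cancel₀ hfac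
  have hm : ((2 * m + 1 : ℕ) : ZMod p) = 0 := by rw [← hp, ZMod.natCast_self]
  push_cast at hm
  rw [centralBinom_mul_factorial_eq hm hj, mul_assoc]

theorem ZMod.two_pow_two_mul_eq_one {p m : ℕ} [Fact p.Prime] (hp : p = 2 * m + 1) :
    (2 : ZMod p) ^ (2 * m) = 1 := by
  have h2 : (2 : ZMod p) ≠ 0 := fun h => by
    have := Nat.le_of_dvd two_pos ((ZMod.natCast_eq_zero_iff 2 p).1 (by exact_mod_cast h))
    have := (Fact.out : p.Prime).two_le
    omega
  rw [show 2 * m = p - 1 by omega, ZMod.pow_card_sub_one_eq_one h2]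

theorem Int.sum_Icc_neg_one_pow_mul_choose_mul_choose (m r : ℕ) :
    ∑ j ∈ Finset.Icc r m, (-1 : ℤ) ^ j * m.choose j * j.choose r =
      if r = m then (-1) ^ m else 0 := by
  rcases lt_or_ge m r with hmr | hrm
  · simp [Finset.Icc_eq_empty_of_lt hmr, hmr.ne']
  have hterm : ∀ i ∈ Finset.range (m - r + 1),
      (-1 : ℤ) ^ (r + i) * m.choose (r + i) * (r + i).choose r
        = (-1) ^ r * m.choose r * ((-1) ^ i * (m - r).choose i) := by
    intro i hi
    have h := congrArg (Nat.cast : ℕ → ℤ) (choose_mul (n := m) (le_add_right r i))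
    simp only [add_tsub_cancel_left] at h
    push_cast at h
    rw [pow_add]
    linear_combination (-1 : ℤ) ^ r * (-1) ^ i * h
  rw [← Ico_add_one_right_eq_Icc, sum_Ico_eq_sum_range, show m + 1 - r = m - r + 1 by omega,
    sum_congr rfl hterm, ← mul_sum, Int.alternating_sum_range_choose]
  obtain rfl | hne := eq_or_ne r m
  · simp
  · simp [hne, show m - r ≠ 0 by omega]

theorem stmt_15_general (p : ℕ) (hp : p.Prime) (hodd : Odd p) (r : ℕ) :
    (r < (p - 1) / 2 →
      (∑ j ∈ Finset.Icc r ((p - 1) / 2),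
        ((2 * j).choose j : ℤ) * (j.choose r : ℤ) * 2 ^ (p - 1 - 2 * j)) ≡ 0 [ZMOD p]) ∧
    (r = (p - 1) / 2 →
      (∑ j ∈ Finset.Icc r ((p - 1) / 2),
        ((2 * j).choose j : ℤ) * (j.choose r : ℤ) * 2 ^ (p - 1 - 2 * j))
        ≡ (-1) ^ ((p - 1) / 2) [ZMOD p]) := by
  have := Fact.mk hp
  set m := (p - 1) / 2
  have hpm : p = 2 * m + 1 := by obtain ⟨k, rfl⟩ := hodd; omega
  have hterm : ∀ j ∈ Finset.Icc r m,
      (((2 * j).choose j * j.choose r * 2 ^ (p - 1 - 2 * j) : ℤ) : ZMod p)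
        = (((-1) ^ j * m.choose j * j.choose r : ℤ) : ZMod p) := by
    intro j hj
    have hjm : j ≤ m := (Finset.mem_Icc.1 hj).2
    have hpow : (2 : ZMod p) ^ (2 * j) * 2 ^ (p - 1 - 2 * j) = 1 := by
      rw [← pow_add, show 2 * j + (p - 1 - 2 * j) = 2 * m by omega,
        ZMod.two_pow_two_mul_eq_one hpm]
    push_cast
    rw [← centralBinom_eq_two_mul_choose, ZMod.centralBinom_eq_neg_four_pow_mul_choose hpm hjm,
      show (-4 : ZMod p) ^ j = (-1) ^ j * 2 ^ (2 * j) by rw [pow_mul, ← mul_pow]; norm_num]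
    linear_combination ((-1) ^ j * m.choose j * j.choose r : ZMod p) * hpow
  have hsum : ∑ j ∈ Finset.Icc r m, ((2 * j).choose j * j.choose r * 2 ^ (p - 1 - 2 * j) : ℤ)
      ≡ if r = m then (-1) ^ m else 0 [ZMOD p] := by
    rw [← ZMod.intCast_eq_intCast_iff, Int.cast_sum, sum_congr rfl hterm, ← Int.cast_sum,
      Int.sum_Icc_neg_one_pow_mul_choose_mul_choose]
  exact ⟨fun h => by simpa [h.ne] using hsum, fun h => by simpa [h] using hsum⟩

theorem stmt_15 (p : ℕ) (hp : p.Prime) (hodd : Odd p) (r : ℕ) (hr : r ≤ (p - 1) / 2) :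
    (r < (p - 1) / 2 →
      (∑ j ∈ Finset.Icc r ((p - 1) / 2),
        ((2 * j).choose j : ℤ) * (j.choose r : ℤ) * 2 ^ (p - 1 - 2 * j)) ≡ 0 [ZMOD p]) ∧
    (r = (p - 1) / 2 →
      (∑ j ∈ Finset.Icc r ((p - 1) / 2),
        ((2 * j).choose j : ℤ) * (j.choose r : ℤ) * 2 ^ (p - 1 - 2 * j))
        ≡ (-1) ^ ((p - 1) / 2) [ZMOD p]) :=
  stmt_15_general p hp hodd r
end

section
/- Let p be an odd prime. Then F_p ≡ Σ_{i=0}^{p-1} Σ_{j=0}^{p-1} (-1)^(i+j) · C(i+j, i)^2 (mod p), where F_p is the p-th Fibonacci number. -/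
/-!
Terms with `i + j ≥ p` vanish mod `p`, so grouping by `n = i + j` and using Vandermonde
turns the double sum into `∑_{n<p} (-1)^n C(2n,n)`. With `p = 2m + 1` one has
`(-1)^n C(2n,n) ≡ 4^n C(m,n)` (both sides obey the same first-order recursion since
`2m ≡ -1`), so the sum is `(4+1)^m = 5^m`. Finally `F_p ≡ 5^m`: in `ℤ[√5]`,
`(1+√5)^p - (1-√5)^p = 2^p F_p √5`, while by the Frobenius congruence the left side is
`2·5^m √5` modulo `p`.
-/

open Finset Nat

theorem Finset.sum_range_sum_range_eq_sum_antidiagonal {M : Type*} [AddCommMonoid M] {N : ℕ}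
    {f : ℕ → ℕ → M} (hf : ∀ i < N, ∀ j < N, N ≤ i + j → f i j = 0) :
    ∑ i ∈ range N, ∑ j ∈ range N, f i j =
      ∑ n ∈ range N, ∑ ij ∈ antidiagonal n, f ij.1 ij.2 := by
  calc ∑ i ∈ range N, ∑ j ∈ range N, f i j
      = ∑ ij ∈ range N ×ˢ range N with ij.1 + ij.2 < N, f ij.1 ij.2 := by
        rw [sum_filter_of_ne, sum_product']
        rintro ⟨i, j⟩ hij hne
        simp only [mem_product, mem_range] at hij
        by_contra! h
        exact hne (hf i hij.1 j hij.2 h)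
    _ = ∑ n ∈ range N, ∑ ij ∈ range N ×ˢ range N with ij.1 + ij.2 < N ∧ ij.1 + ij.2 = n,
          f ij.1 ij.2 := by
        rw [← sum_fiberwise_of_maps_to (g := fun ij : ℕ × ℕ => ij.1 + ij.2) (t := range N)]
        · simp only [filter_filter]
        · simp
    _ = ∑ n ∈ range N, ∑ ij ∈ antidiagonal n, f ij.1 ij.2 := by
        refine sum_congr rfl fun n hn => sum_congr ?_ fun _ _ => rfl
        ext ⟨i, j⟩
        simp only [mem_range] at hn
        simp only [mem_filter, mem_product, mem_range, HasAntidiagonal.mem_antidiagonal]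
        omega

theorem sum_antidiagonal_neg_one_pow_mul_choose_sq {R : Type*} [CommRing R] (n : ℕ) :
    ∑ ij ∈ antidiagonal n, (-1) ^ (ij.1 + ij.2) * ((ij.1 + ij.2).choose ij.1 : R) ^ 2
      = (-1) ^ n * (n.centralBinom : R) := by
  rw [sum_congr rfl fun ij hij => by rw [HasAntidiagonal.mem_antidiagonal.1 hij],
    Finset.Nat.sum_antidiagonal_eq_sum_range_succ_mk, ← mul_sum,
    Nat.centralBinom_eq_two_mul_choose,
    ← Nat.sum_range_choose_sq]
  push_cast
  rfl

theorem one_add_pow_sub_one_sub_pow {R : Type*} [CommRing R] {s : R} (hs : s * s = 5) (n : ℕ) :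
    (1 + s) ^ n - (1 - s) ^ n = 2 ^ n * Nat.fib n * s := by
  induction n using Nat.twoStepInduction with
  | zero => simp
  | one => simp only [pow_one, Nat.fib_one, Nat.cast_one]; ring
  | more n ih₀ ih₁ =>
    rw [Nat.fib_add_two]
    push_cast
    linear_combination 2 * ih₁ + 4 * ih₀ + ((1 + s) ^ n - (1 - s) ^ n) * hs

theorem ZMod.fib_prime_eq_five_pow {p : ℕ} [Fact p.Prime] (hodd : Odd p) :
    (Nat.fib p : ZMod p) = 5 ^ (p / 2) := by
  have hp : p.Prime := Fact.out
  set s : ℤ√5 := Zsqrtd.sqrtd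
  have hs : s * s = 5 := Zsqrtd.dmuld
  have hsp : s ^ p = 5 ^ (p / 2) * s := by
    conv_lhs => rw [← Nat.two_mul_div_two_add_one_of_odd hodd]
    rw [pow_succ, pow_mul, sq, hs]
  obtain ⟨r, hr⟩ := exists_add_pow_prime_eq hp 1 s
  obtain ⟨r', hr'⟩ := exists_add_pow_prime_eq hp 1 (-s)
  have hdvd :
      ((p : ℤ) : ℤ√5) ∣ ((2 ^ p * Nat.fib p - 2 * 5 ^ (p / 2) : ℤ) : ℤ√5) * s := by
    rw [hsp] at hr
    rw [← sub_eq_add_neg, hodd.neg_pow, hsp] at hr'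
    refine ⟨s * (r + r'), ?_⟩
    push_cast
    linear_combination (one_add_pow_sub_one_sub_pow hs p).symm + hr - hr'
  have hdvd_im := ((Zsqrtd.intCast_dvd _ _).1 hdvd).2
  rw [Zsqrtd.im_smul, Zsqrtd.im_sqrtd, mul_one, ← ZMod.intCast_zmod_eq_zero_iff_dvd] at hdvd_im
  push_cast [ZMod.pow_card] at hdvd_im
  have h2 : (2 : ZMod p) ≠ 0 := Ring.two_ne_zero <| by
    rw [ZMod.ringChar_zmod_n]; rintro rfl; exact Nat.not_even_iff_odd.2 hodd even_two
  exact mul_left_cancel₀ h2 (by linear_combination hdvd_im)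

theorem ZMod.neg_one_pow_mul_centralBinom {p : ℕ} [Fact p.Prime] (hodd : Odd p) {n : ℕ}
    (hn : n ≤ p / 2) :
    (-1) ^ n * (n.centralBinom : ZMod p) = 4 ^ n * ((p / 2).choose n : ZMod p) := by
  have h2m : (2 * (p / 2 : ℕ) : ZMod p) = -1 := by
    have : ((2 * (p / 2) + 1 : ℕ) : ZMod p) = 0 := by
      rw [Nat.two_mul_div_two_add_one_of_odd hodd, ZMod.natCast_self]
    push_cast at this
    linear_combination this
  induction n with
  | zero => simp
  | succ n ih =>
    have hn' : ((n + 1 : ℕ) : ZMod p) ≠ 0 := by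
      rw [Ne, ZMod.natCast_eq_zero_iff]
      exact Nat.not_dvd_of_pos_of_lt n.succ_pos (by omega)
    have hc := congrArg (Nat.cast : ℕ → ZMod p) (Nat.succ_mul_centralBinom_succ n)
    have hm := congrArg (Nat.cast : ℕ → ZMod p) (Nat.choose_succ_right_eq (p / 2) n)
    push_cast [Nat.cast_sub (by omega : n ≤ p / 2)] at hc hm
    apply mul_left_cancel₀ hn'
    push_cast
    linear_combination -(-1) ^ n * hc - 2 * (2 * n + 1) * ih (by omega) - 4 * 4 ^ n * hm
      - 2 * 4 ^ n * ((p / 2).choose n : ZMod p) * h2m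

theorem ZMod.sum_range_neg_one_pow_mul_centralBinom {p : ℕ} [Fact p.Prime] (hodd : Odd p) :
    ∑ n ∈ range p, (-1) ^ n * (n.centralBinom : ZMod p) = 5 ^ (p / 2) := by
  have hp : p.Prime := Fact.out
  rw [← sum_subset (range_subset_range.2 (show p / 2 + 1 ≤ p by have := hp.two_le; omega))]
  · calc ∑ n ∈ range (p / 2 + 1), (-1) ^ n * (n.centralBinom : ZMod p)
        = ∑ n ∈ range (p / 2 + 1), 4 ^ n * 1 ^ (p / 2 - n) * ((p / 2).choose n : ZMod p) :=
          sum_congr rfl fun n hn => by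
            rw [one_pow, mul_one,
              neg_one_pow_mul_centralBinom hodd (Nat.lt_succ_iff.1 (mem_range.1 hn))]
      _ = 5 ^ (p / 2) := by rw [← add_pow]; norm_num
  · intro n hn hn'
    simp only [mem_range, not_lt] at hn hn'
    rw [Nat.centralBinom_eq_two_mul_choose, two_mul,
      (ZMod.natCast_eq_zero_iff _ _).2 (hp.dvd_choose_add hn hn (by omega)), mul_zero]

theorem stmt_16 (p : ℕ) (hp : p.Prime) (hodd : Odd p) :
    (Nat.fib p : ℤ) ≡
      ∑ i ∈ Finset.range p, ∑ j ∈ Finset.range p,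
        (-1 : ℤ) ^ (i + j) * ((i + j).choose i : ℤ) ^ 2 [ZMOD p] := by
  have : Fact p.Prime := ⟨hp⟩
  rw [← ZMod.intCast_eq_intCast_iff]
  push_cast
  rw [sum_range_sum_range_eq_sum_antidiagonal fun i hi j hj hij => by
      rw [(ZMod.natCast_eq_zero_iff _ _).2 (hp.dvd_choose_add hi hj hij)]; ring,
    ZMod.fib_prime_eq_five_pow hodd, ← ZMod.sum_range_neg_one_pow_mul_centralBinom hodd]
  exact sum_congr rfl fun n _ => (sum_antidiagonal_neg_one_pow_mul_choose_sq n).symm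
end

section
/- Let p be an odd prime. Then F_p ≡ Σ_{j=0}^{(p-1)/2} (-1)^j · C(2j, j) (mod p), where F_p is the p-th Fibonacci number. -/
/-!
Write `p = 2m + 1`. In `𝔽_p[ω]` with `ω² = ω + 1` one has `ω^p = F_p ω + F_{p-1}`, and
`√5 := 2ω - 1` satisfies both `√5^p = 2ω^p - 1` (Frobenius) and `√5^p = 5^m √5`; comparing
`ω`-coefficients gives `F_p ≡ 5^m`. On the other side `2m ≡ -1`, so `C(m, j) ≡ C(-1/2, j) =
(-1/4)^j C(2j, j)`, and the sum becomes `∑ 4^j C(m, j) = 5^m`.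
-/

open Nat Finset

theorem pow_succ_eq_fib_mul_add_fib {R : Type*} [CommRing R] {x : R} (hx : x ^ 2 = x + 1)
    (n : ℕ) : x ^ (n + 1) = fib (n + 1) * x + fib n := by
  induction n with
  | zero => simp
  | succ n ih =>
    rw [pow_succ, ih, fib_add_two]
    push_cast
    linear_combination (fib (n + 1) : R) * hx

theorem fib_prime_eq_five_pow {p m : ℕ} [Fact p.Prime] (hm : p = 2 * m + 1) :
    (fib p : ZMod p) = 5 ^ m := by
  let ω : QuadraticAlgebra (ZMod p) 1 1 := QuadraticAlgebra.omega
  have : CharP (QuadraticAlgebra (ZMod p) 1 1) p :=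
    charP_of_injective_algebraMap QuadraticAlgebra.algebraMap_injective p
  have hω : ω ^ 2 = ω + 1 := by
    rw [sq, QuadraticAlgebra.omega_mul_omega_eq_add, one_smul, one_smul, add_comm]
  have key : 2 * ((fib p : QuadraticAlgebra (ZMod p) 1 1) * ω + fib (2 * m)) - 1
      = 5 ^ m * (2 * ω - 1) := by
    calc _ = 2 * ω ^ p - 1 := by
          rw [congrArg (ω ^ ·) hm, pow_succ_eq_fib_mul_add_fib hω, ← hm]
      _ = (ω + ω - 1) ^ p := by rw [sub_pow_char, add_pow_char, one_pow, two_mul]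
      _ = ((2 * ω - 1) ^ 2) ^ m * (2 * ω - 1) := by
          rw [congrArg (_ ^ ·) hm, pow_succ, pow_mul, two_mul]
      _ = 5 ^ m * (2 * ω - 1) := by congr 2; linear_combination 4 * hω
  have key_im : 2 * (fib p : ZMod p) = 5 ^ m * 2 := by
    simpa [ω, QuadraticAlgebra.re_one, QuadraticAlgebra.im_one, ← QuadraticAlgebra.C_ofNat,
      ← map_pow] using congrArg QuadraticAlgebra.im key
  refine mul_left_cancel₀ (Ring.two_ne_zero ?_) (key_im.trans (mul_comm _ _))
  rw [ZMod.ringChar_zmod_n]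
  omega

theorem neg_one_pow_mul_factorial_two_mul_eq {R : Type*} [CommRing R] {x : R}
    (hx : 2 * x + 1 = 0) (j : ℕ) :
    (-1) ^ j * ((2 * j)! : R) = 4 ^ j * (descPochhammer R j).eval x * j ! := by
  induction j with
  | zero => simp
  | succ j ih =>
    rw [descPochhammer_succ_eval, show 2 * (j + 1) = 2 * j + 1 + 1 by ring, factorial_succ,
      factorial_succ, factorial_succ]
    push_cast
    -- `4 (x - j) (j + 1) = -(2j + 1) (2j + 2)` since `2x = -1`
    linear_combination (-(2 * (j : R) + 1) * (2 * j + 2)) * ih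
      - 4 ^ j * (descPochhammer R j).eval x * j ! * (2 * (j : R) + 2) * hx

theorem neg_one_pow_mul_choose_two_mul_eq {R : Type*} [CommRing R] [NoZeroDivisors R]
    {m j : ℕ} (hm : 2 * (m : R) + 1 = 0) (hj : (j ! : R) ≠ 0) :
    (-1) ^ j * ((2 * j).choose j : R) = 4 ^ j * m.choose j := by
  have h := neg_one_pow_mul_factorial_two_mul_eq hm j
  rw [descPochhammer_eval_eq_descFactorial, descFactorial_eq_factorial_mul_choose,
    ← choose_mul_factorial_mul_factorial (show j ≤ 2 * j by omega),
    show 2 * j - j = j by omega] at h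
  push_cast at h
  refine mul_right_cancel₀ (mul_ne_zero hj hj) ?_
  linear_combination h

theorem stmt_17 (p : ℕ) (hp : p.Prime) (hodd : Odd p) :
    (Nat.fib p : ℤ) ≡
      ∑ j ∈ Finset.range ((p - 1) / 2 + 1),
        (-1 : ℤ) ^ j * ((2 * j).choose j : ℤ) [ZMOD p] := by
  have : Fact p.Prime := ⟨hp⟩
  obtain ⟨m, hm⟩ := hodd
  rw [show (p - 1) / 2 = m by omega, ← ZMod.intCast_eq_intCast_iff]
  push_cast
  have hm_cast : 2 * (m : ZMod p) + 1 = 0 := by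
    exact_mod_cast (ZMod.natCast_eq_zero_iff (2 * m + 1) p).mpr ⟨1, by omega⟩
  have hfact (j : ℕ) (hj : j ∈ range (m + 1)) : (j ! : ZMod p) ≠ 0 := by
    rw [Ne, ZMod.natCast_eq_zero_iff, hp.dvd_factorial]
    rw [mem_range] at hj
    omega
  rw [fib_prime_eq_five_pow hm,
    sum_congr rfl fun j hj ↦ neg_one_pow_mul_choose_two_mul_eq hm_cast (hfact j hj),
    show (5 : ZMod p) = 4 + 1 by norm_num, add_pow]
  exact sum_congr rfl fun j _ ↦ by ring
end

section
/- Let p be an odd prime. Then F_{p+1} ≡ Σ_{j=0}^{(p-1)/2} (-1)^j · C(2j-1, j) (mod p), where F_{p+1} is the (p+1)-st Fibonacci number and C(2j-1, j) is interpreted with truncated natural subtraction (so when j = 0 the term C(2j-1, j) = C(0,0) = 1). -/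
/-!
In the antidiagonal formula `F_{n+1} = ∑ C(n - j, j)` the terms with `j > n / 2` vanish.
Modulo `p`, `p - j` is `-j`, and upper negation `C(-a, k) = (-1)^k C(a + k - 1, k)` turns
`C(p - j, j)` into `(-1)^j C(2j - 1, j)`; upper negation holds modulo `p` as long as `k!` is a unit,
i.e. `k < p`.
-/

open Finset

theorem Nat.fib_succ_eq_sum_range_choose (n : ℕ) :
    fib (n + 1) = ∑ j ∈ range (n / 2 + 1), (n - j).choose j := by
  rw [fib_succ_eq_sum_choose, ← Finset.Nat.sum_antidiagonal_swap]
  simp only [Prod.fst_swap, Prod.snd_swap]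
  rw [Finset.Nat.sum_antidiagonal_eq_sum_range_succ fun i j ↦ j.choose i]
  refine (sum_subset (fun j hj ↦ by simp only [mem_range] at hj ⊢; omega) fun j _ hj ↦ ?_).symm
  simp only [mem_range, not_lt] at hj
  exact Nat.choose_eq_zero_of_lt (by omega)

theorem Nat.cast_sub_descFactorial {R : Type*} [CommRing R] (p : ℕ) [CharP R p] {a : ℕ}
    (ha : a ≤ p) (k : ℕ) :
    ((p - a).descFactorial k : R) = (-1) ^ k * a.ascFactorial k := by
  have hneg : ((p - a : ℕ) : R) = -a := by
    rw [Nat.cast_sub ha, CharP.cast_eq_zero, zero_sub]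
  rw [← descPochhammer_eval_eq_descFactorial, hneg, cast_ascFactorial, ← neg_neg (a : R),
    ascPochhammer_eval_neg_eq_descPochhammer, neg_neg, ← mul_assoc, ← pow_add, ← two_mul,
    pow_mul, neg_one_sq, one_pow, one_mul]

theorem ZMod.natCast_choose_sub {p : ℕ} [Fact p.Prime] {a k : ℕ} (ha : a ≤ p) (hk : k < p) :
    ((p - a).choose k : ZMod p) = (-1) ^ k * (a + k - 1).choose k := by
  have hfact : (k.factorial : ZMod p) ≠ 0 := by
    rw [Ne, ZMod.natCast_eq_zero_iff, Nat.Prime.dvd_factorial Fact.out]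
    omega
  apply mul_left_cancel₀ hfact
  have h := Nat.cast_sub_descFactorial (R := ZMod p) p ha k
  rw [Nat.descFactorial_eq_factorial_mul_choose, Nat.ascFactorial_eq_factorial_mul_choose'] at h
  push_cast at h
  rw [h]
  ring

theorem stmt_19 (p : ℕ) (hp : p.Prime) (hodd : Odd p) :
    (Nat.fib (p + 1) : ℤ) ≡
      ∑ j ∈ Finset.range ((p - 1) / 2 + 1),
        (-1 : ℤ) ^ j * ((2 * j - 1).choose j : ℤ) [ZMOD p] := by
  have := Fact.mk hp
  have hhalf : (p - 1) / 2 = p / 2 := by obtain ⟨m, rfl⟩ := hodd; omega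
  rw [← ZMod.intCast_eq_intCast_iff, Nat.fib_succ_eq_sum_range_choose, hhalf]
  push_cast
  refine sum_congr rfl fun j hj ↦ ?_
  have hjp : j < p := by have := hp.two_le; simp only [mem_range] at hj; omega
  rw [ZMod.natCast_choose_sub hjp.le hjp, two_mul]
end
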